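/- arXiv:2411.04875 — 2 statements merged into one kernel-verified Lean document; each statement's English description precedes it below -/
import Mathlib

section
/- Let A be a unital C*-algebra, a a nonzero positive element of A, and f ∈ S_a(A). Let x_1,…,x_n, y_1,…,y_n ∈ A such that each y_i admits an a-adjoint y_i^{#a}, and let p_1,…,p_n ≥ 0 with Σ_{i=1}^n p_i = 1. Then |Σ_{i=1}^n p_i f(a x_i)| · |Σ_{i=1}^n p_i f(a y_i)| ≤ (1/2)·√(Σ_{i=1}^n p_i f(a x_i^{#a} x_i)) · √(Σ_{i=1}^n p_i f(a y_i y_i^{#a})) + (1/2)·|Σ_{i=1}^n p_i f(a y_i x_i)|, where also each x_i admits an a-adjoint x_i^{#a}. -/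
/-!
Buzano's inequality: for a unit vector `e` of a (pre-)inner product space,
`|⟪e, x⟫ ⟪y, e⟫| ≤ (‖x‖ ‖y‖ + |⟪y, x⟫|) / 2`, because `2 ⟪e, x⟫ e - x` has the same norm as `x`.
Apply it to the positive semidefinite form `⟪u, v⟫ = ∑ pᵢ f (uᵢ* a vᵢ)` on `Aⁿ` with
`e = (1, …, 1)`, `x = (xᵢ)` and `y = (yᵢ^{#a})`: as `a` is self-adjoint, `(yᵢ^{#a})* a = a yᵢ`,
which turns each inner product into the corresponding sum of the statement.
-/

open scoped ComplexOrder

section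

variable {A : Type*} [CStarAlgebra A] [PartialOrder A] [StarOrderedRing A]

/-- A positive linear functional on `A`: `f (x* x) ≥ 0` for all `x`. -/
def IsPosLF (f : A →ₗ[ℂ] ℂ) : Prop := ∀ x : A, 0 ≤ f (star x * x)

/-- Membership in `S_a(A)`: positive linear functionals `f` with `f a = 1`. -/
def MemSa (a : A) (f : A →ₗ[ℂ] ℂ) : Prop := IsPosLF f ∧ f a = 1

open scoped InnerProductSpace

theorem norm_inner_mul_norm_inner_le_of_norm_eq_one {𝕜 E : Type*} [RCLike 𝕜]
    [SeminormedAddCommGroup E] [InnerProductSpace 𝕜 E] {e : E} (he : ‖e‖ = 1) (x y : E) :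
    ‖⟪e, x⟫_𝕜‖ * ‖⟪y, e⟫_𝕜‖ ≤ 1 / 2 * (‖x‖ * ‖y‖) + 1 / 2 * ‖⟪y, x⟫_𝕜‖ := by
  -- `z` is the reflection of `x` in the line through `e`, so `‖z‖ = ‖x‖`
  set z : E := (2 * ⟪e, x⟫_𝕜) • e - x
  have hz : ‖z‖ = ‖x‖ := by
    have hsq : ‖z‖ ^ 2 = ‖x‖ ^ 2 := by
      rw [@norm_sub_sq 𝕜, norm_smul, inner_smul_left, he, map_mul (starRingEnd 𝕜), map_ofNat,
        mul_assoc, RCLike.conj_mul, norm_mul, RCLike.norm_two]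
      norm_cast
      ring
    exact (sq_eq_sq₀ (norm_nonneg _) (norm_nonneg _)).mp hsq
  have hyz : 2 * ⟪e, x⟫_𝕜 * ⟪y, e⟫_𝕜 = ⟪y, z⟫_𝕜 + ⟪y, x⟫_𝕜 := by
    rw [inner_sub_right, inner_smul_right]
    ring
  have htwice := calc 2 * (‖⟪e, x⟫_𝕜‖ * ‖⟪y, e⟫_𝕜‖)
      = ‖⟪y, z⟫_𝕜 + ⟪y, x⟫_𝕜‖ := by rw [← hyz, norm_mul, norm_mul, RCLike.norm_two, mul_assoc]
    _ ≤ ‖y‖ * ‖z‖ + ‖⟪y, x⟫_𝕜‖ := (norm_add_le _ _).trans (by gcongr; exact norm_inner_le_norm _ _)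
  rw [hz] at htwice
  linarith

theorem PreInnerProductSpace.Core.norm_inner_mul_norm_inner_le_of_inner_self_eq_one
    {𝕜 F : Type*} [RCLike 𝕜] [AddCommGroup F] [Module 𝕜 F] (c : PreInnerProductSpace.Core 𝕜 F)
    {e : F} (he : c.inner e e = 1) (x y : F) :
    ‖c.inner e x‖ * ‖c.inner y e‖ ≤
      1 / 2 * (√(RCLike.re (c.inner x x)) * √(RCLike.re (c.inner y y))) + 1 / 2 * ‖c.inner y x‖ := by
  let := InnerProductSpace.Core.toSeminormedAddCommGroup (c := c)
  let := InnerProductSpace.ofCore c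
  have he' : ‖e‖ = 1 := by
    rw [show ‖e‖ = √(RCLike.re (c.inner e e)) from rfl, he, RCLike.one_re, Real.sqrt_one]
  exact norm_inner_mul_norm_inner_le_of_norm_eq_one he' x y

theorem IsPosLF.map_nonneg {f : A →ₗ[ℂ] ℂ} (hf : IsPosLF f) {x : A} (hx : 0 ≤ x) : 0 ≤ f x := by
  rw [StarOrderedRing.nonneg_iff] at hx
  induction hx using AddSubmonoid.closure_induction with
  | mem _ hs => obtain ⟨s, rfl⟩ := hs; exact hf s
  | zero => simp
  | add _ _ _ _ hx hy => rw [map_add]; exact add_nonneg hx hy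

theorem IsPosLF.map_star {f : A →ₗ[ℂ] ℂ} (hf : IsPosLF f) (x : A) : f (star x) = star (f x) :=
  StarHomClass.map_star (PositiveLinearMap.mk₀ f fun _ ↦ hf.map_nonneg) x

noncomputable abbrev IsPosLF.weightedCore {f : A →ₗ[ℂ] ℂ} (hf : IsPosLF f) {a : A} (ha : 0 ≤ a)
    {ι : Type*} [Fintype ι] (p : ι → ℝ) (hp : ∀ i, 0 ≤ p i) :
    PreInnerProductSpace.Core ℂ (ι → A) where
  inner u v := ∑ i, (p i : ℂ) * f (star (u i) * (a * v i))
  conj_inner_symm u v := by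
    simp only [map_sum, map_mul, Complex.conj_ofReal, ← Complex.star_def, ← hf.map_star,
      star_mul, star_star, ha.isSelfAdjoint.star_eq, mul_assoc]
  re_inner_nonneg u := by
    refine (Complex.nonneg_iff.mp (Finset.sum_nonneg fun i _ ↦ mul_nonneg ?_ ?_)).1
    · exact_mod_cast hp i
    · exact hf.map_nonneg (mul_assoc (star (u i)) a (u i) ▸ star_left_conjugate_nonneg ha _)
  add_left u v w := by
    simp only [Pi.add_apply, star_add, add_mul, map_add, mul_add, Finset.sum_add_distrib]
  smul_left u v r := by
    simp only [Pi.smul_apply, star_smul, smul_mul_assoc, map_smul, Complex.star_def, smul_eq_mul,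
      Finset.mul_sum, mul_left_comm]

theorem IsPosLF.weightedCore_inner {f : A →ₗ[ℂ] ℂ} (hf : IsPosLF f) {a : A} (ha : 0 ≤ a)
    {ι : Type*} [Fintype ι] {p : ι → ℝ} (hp : ∀ i, 0 ≤ p i) (u v : ι → A) :
    (hf.weightedCore ha p hp).inner u v = ∑ i, (p i : ℂ) * f (star (u i) * (a * v i)) :=
  rfl

theorem stmt3_general (a : A) (ha : 0 ≤ a)
    (f : A →ₗ[ℂ] ℂ) (hf : MemSa a f)
    (n : ℕ) (x y xadj yadj : Fin n → A)
    (hxadj : ∀ i, a * xadj i = star (x i) * a)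
    (hyadj : ∀ i, a * yadj i = star (y i) * a)
    (p : Fin n → ℝ) (hp : ∀ i, 0 ≤ p i) (hp1 : ∑ i, p i = 1) :
    ‖∑ i, (p i : ℂ) * f (a * x i)‖ *
        ‖∑ i, (p i : ℂ) * f (a * y i)‖ ≤
      (1 / 2) * (Real.sqrt (∑ i, p i * (f (a * (xadj i * x i))).re) *
          Real.sqrt (∑ i, p i * (f (a * (y i * yadj i))).re)) +
        (1 / 2) * ‖∑ i, (p i : ℂ) * f (a * (y i * x i))‖ := by
  obtain ⟨hf, hfa⟩ := hf
  have hyadj' (i : Fin n) : star (yadj i) * a = a * y i := by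
    simpa only [star_mul, star_star, ha.isSelfAdjoint.star_eq] using congrArg star (hyadj i)
  have hunit : (hf.weightedCore ha p hp).inner 1 1 = 1 := by
    simp only [IsPosLF.weightedCore_inner, Pi.one_apply, star_one, one_mul, mul_one, hfa,
      ← Complex.ofReal_sum, hp1, Complex.ofReal_one]
  have key := (hf.weightedCore ha p hp).norm_inner_mul_norm_inner_le_of_inner_self_eq_one
    hunit x yadj
  simp only [IsPosLF.weightedCore_inner, Pi.one_apply, star_one, one_mul, mul_one, ← mul_assoc,
    ← hxadj, hyadj'] at key
  simpa only [mul_assoc, RCLike.re_to_complex, Complex.re_sum, Complex.re_ofReal_mul] using key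

/-- Buzano-type inequality for convex combinations. -/
theorem stmt3 (a : A) (ha : 0 ≤ a) (ha0 : a ≠ 0)
    (f : A →ₗ[ℂ] ℂ) (hf : MemSa a f)
    (n : ℕ) (x y xadj yadj : Fin n → A)
    (hxadj : ∀ i, a * xadj i = star (x i) * a)
    (hyadj : ∀ i, a * yadj i = star (y i) * a)
    (p : Fin n → ℝ) (hp : ∀ i, 0 ≤ p i) (hp1 : ∑ i, p i = 1) :
    ‖∑ i, (p i : ℂ) * f (a * x i)‖ *
        ‖∑ i, (p i : ℂ) * f (a * y i)‖ ≤
      (1 / 2) * (Real.sqrt (∑ i, p i * (f (a * (xadj i * x i))).re) *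
          Real.sqrt (∑ i, p i * (f (a * (y i * yadj i))).re)) +
        (1 / 2) * ‖∑ i, (p i : ℂ) * f (a * (y i * x i))‖ :=
  stmt3_general a ha f hf n x y xadj yadj hxadj hyadj p hp hp1

end
end

section
/- Let A be a unital C*-algebra, g a state on A, x, z ∈ A, y an invertible element of A, and 0 ≤ α ≤ 1. Then |g(x y z)|² ≤ g(x·|y*|^{2(1−α)}·x*) · g(z*·|y|^{2α}·z), where |y| = (y*y)^{1/2}, |y*| = (y y*)^{1/2}, and the real powers are taken by continuous functional calculus. -/
/-!
Cauchy–Schwarz for the positive sesquilinear form `(a, b) ↦ g (a⋆ b)`, applied to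
`a = (x y |y|^{-α})⋆` and `b = |y|^α z`, gives the bound with `x y |y|^{-2α} y⋆ x⋆` in the first
factor. Writing `y = u |y|` with `u = y |y|^{-1}` unitary, conjugation by `u` carries `y⋆y` to
`y y⋆` and commutes with the functional calculus, so `y (y⋆y)^β = (y y⋆)^β y`; hence
`y |y|^{-2α} y⋆ = (y y⋆)^{-α} y y⋆ = |y⋆|^{2(1-α)}`.
-/

open scoped ComplexOrder

section

variable {A : Type*} [CStarAlgebra A] [PartialOrder A] [StarOrderedRing A]

/-- A state on `A`: a positive linear functional with `g 1 = 1`. -/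
def IsState (g : A →ₗ[ℂ] ℂ) : Prop := IsPosLF g ∧ g 1 = 1

/-- The (algebraic) numerical radius `v(x) = sup {|g x| : g a state on A}`. -/
noncomputable def nr (x : A) : ℝ :=
  sSup {r : ℝ | ∃ g : A →ₗ[ℂ] ℂ, IsState g ∧ r = ‖g x‖}

/-- The modulus `|w| = (w* w)^{1/2}` given by the continuous functional calculus. -/
noncomputable def absA (w : A) : A := cfc (fun t : ℝ => Real.sqrt t) (star w * w)

open scoped InnerProductSpace

lemma PositiveLinearMap.norm_apply_star_mul_sq_le {B : Type*} [NonUnitalCStarAlgebra B]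
    [PartialOrder B] [StarOrderedRing B] (f : B →ₚ[ℂ] ℂ) (a b : B) :
    ‖f (star a * b)‖ ^ 2 ≤ (f (star a * a)).re * (f (star b * b)).re := by
  have norm_sq (c : B) : ‖f.toPreGNS c‖ ^ 2 = (f (star c * c)).re := by
    simpa [← Complex.ofReal_pow] using congrArg Complex.re (f.preGNS_norm_sq (f.toPreGNS c))
  calc ‖f (star a * b)‖ ^ 2 = ‖⟪f.toPreGNS a, f.toPreGNS b⟫_ℂ‖ ^ 2 := rfl
    _ ≤ (‖f.toPreGNS a‖ * ‖f.toPreGNS b‖) ^ 2 := by gcongr; exact norm_inner_le_norm _ _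
    _ = (f (star a * a)).re * (f (star b * b)).re := by rw [mul_pow, norm_sq, norm_sq]

noncomputable def IsPosLF.toPositiveLinearMap {f : A →ₗ[ℂ] ℂ} (hf : IsPosLF f) : A →ₚ[ℂ] ℂ :=
  PositiveLinearMap.mk₀ f fun a ha => by
    obtain ⟨b, rfl⟩ := CStarAlgebra.nonneg_iff_eq_star_mul_self.mp ha
    exact hf b

section

open CFC

lemma IsStrictlyPositive.rpow_half_mul_rpow_half {a : A} (ha : IsStrictlyPositive a) (β : ℝ) :
    a ^ (β / 2) * a ^ (β / 2) = a ^ β := by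
  rw [← rpow_add ha.isUnit, add_halves]

lemma IsStrictlyPositive.rpow_neg_half_mul_mul_rpow_neg_half {a : A} (ha : IsStrictlyPositive a) :
    a ^ (-(1 / 2) : ℝ) * a * a ^ (-(1 / 2) : ℝ) = 1 := by
  nth_rw 2 [← rpow_one a ha.nonneg]
  rw [← rpow_add ha.isUnit, ← rpow_add ha.isUnit, show (-(1 / 2) + 1 + -(1 / 2) : ℝ) = 0 by ring,
    rpow_zero a ha.nonneg]

lemma IsPosLF.norm_apply_mul_sq_le {f : A →ₗ[ℂ] ℂ} (hf : IsPosLF f) {a : A}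
    (ha : IsStrictlyPositive a) (x z : A) (α : ℝ) :
    ‖f (x * z)‖ ^ 2 ≤ (f (x * a ^ (-α) * star x)).re * (f (star z * a ^ α * z)).re := by
  have hsa (r : ℝ) : star (a ^ r) = a ^ r := (rpow_nonneg (a := a)).isSelfAdjoint.star_eq
  have hcs := hf.toPositiveLinearMap.norm_apply_star_mul_sq_le
    (a ^ (-α / 2) * star x) (a ^ (α / 2) * z)
  have hxz : star (a ^ (-α / 2) * star x) * (a ^ (α / 2) * z) = x * z := by
    rw [star_mul, star_star, hsa, mul_assoc, ← mul_assoc (a ^ _), ← rpow_add ha.isUnit, neg_div,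
      neg_add_cancel, rpow_zero a ha.nonneg, one_mul]
  have hxx : star (a ^ (-α / 2) * star x) * (a ^ (-α / 2) * star x) = x * a ^ (-α) * star x := by
    rw [star_mul, star_star, hsa, ← ha.rpow_half_mul_rpow_half (-α)]
    noncomm_ring
  have hzz : star (a ^ (α / 2) * z) * (a ^ (α / 2) * z) = star z * a ^ α * z := by
    rw [star_mul, hsa, ← ha.rpow_half_mul_rpow_half α]
    noncomm_ring
  rwa [hxz, hxx, hzz] at hcs

lemma IsUnit.isStrictlyPositive_star_mul_self {y : A} (hy : IsUnit y) :
    IsStrictlyPositive (star y * y) :=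
  CStarAlgebra.isStrictlyPositive_iff_eq_star_mul_self.mpr ⟨y, hy, rfl⟩

lemma IsUnit.isStrictlyPositive_mul_star_self {y : A} (hy : IsUnit y) :
    IsStrictlyPositive (y * star y) :=
  CStarAlgebra.isStrictlyPositive_iff_eq_mul_star_self.mpr ⟨y, hy, rfl⟩

lemma absA_eq_sqrt (y : A) : absA y = sqrt (star y * y) := by
  rw [absA, sqrt_eq_real_sqrt _ (star_mul_self_nonneg y), cfcₙ_eq_cfc]

lemma cfc_rpow_two_mul_absA {y : A} (hy : IsUnit y) (β : ℝ) :
    cfc (fun t : ℝ => t ^ (2 * β)) (absA y) = (star y * y) ^ β := by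
  rw [absA_eq_sqrt, ← rpow_eq_cfc_real, rpow_sqrt _ _ (hy.star.mul hy)]
  ring_nf

lemma IsUnit.mul_rpow_neg_half_mem_unitary {y : A} (hy : IsUnit y) :
    y * (star y * y) ^ (-(1 / 2) : ℝ) ∈ unitary A := by
  have hb := hy.isStrictlyPositive_star_mul_self
  refine (hy.mul (hb.rpow _ (-(1 / 2))).isUnit).mem_unitary_iff_star_mul_self.mpr ?_
  rw [star_mul, rpow_nonneg.isSelfAdjoint.star_eq, ← hb.rpow_neg_half_mul_mul_rpow_neg_half]
  noncomm_ring

lemma IsUnit.mul_rpow_star_mul_self {y : A} (hy : IsUnit y) (β : ℝ) :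
    y * (star y * y) ^ β = (y * star y) ^ β * y := by
  have hb := hy.isStrictlyPositive_star_mul_self
  set b := star y * y
  set u : unitary A := ⟨_, hy.mul_rpow_neg_half_mem_unitary⟩
  have hpolar : y = u * b ^ (1 / 2 : ℝ) := by
    show y = y * _ * _
    rw [mul_assoc, ← rpow_add hb.isUnit, neg_add_cancel, rpow_zero _ hb.nonneg, mul_one]
  have hconj : Unitary.conjStarAlgAut ℂ A u b = y * star y := by
    show y * _ * b * star (y * _) = y * star y
    rw [star_mul, (rpow_nonneg (a := b)).isSelfAdjoint.star_eq]
    calc y * b ^ (-(1 / 2) : ℝ) * b * (b ^ (-(1 / 2) : ℝ) * star y)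
        = y * (b ^ (-(1 / 2) : ℝ) * b * b ^ (-(1 / 2) : ℝ)) * star y := by noncomm_ring
      _ = y * star y := by rw [hb.rpow_neg_half_mul_mul_rpow_neg_half, mul_one]
  have hcont : ContinuousOn (fun t : NNReal => t ^ β) (spectrum NNReal b) :=
    fun t ht => (NNReal.continuousAt_rpow_const
      (Or.inl (ne_of_mem_of_not_mem ht (spectrum.zero_notMem NNReal hb.isUnit)))).continuousWithinAt
  have hmap : u * b ^ β * star (u : A) = (y * star y) ^ β := by
    rw [← hconj]
    exact StarAlgHomClass.map_cfc (Unitary.conjStarAlgAut ℂ A u) (fun t : NNReal => t ^ β) b hcont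
      (by fun_prop) hb.nonneg (by rw [hconj]; exact mul_star_self_nonneg y)
  have hcomm : b ^ (1 / 2 : ℝ) * b ^ β = b ^ β * b ^ (1 / 2 : ℝ) := by
    rw [← rpow_add hb.isUnit, ← rpow_add hb.isUnit, add_comm]
  calc y * b ^ β = u * (b ^ β * b ^ (1 / 2 : ℝ)) := by rw [hpolar, mul_assoc, hcomm]
    _ = u * b ^ β * star (u : A) * (u * b ^ (1 / 2 : ℝ)) := by
      rw [mul_assoc _ (star (u : A)), ← mul_assoc (star (u : A)), Unitary.coe_star_mul_self,
        one_mul]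
      simp only [mul_assoc]
    _ = (y * star y) ^ β * y := by rw [hmap, ← hpolar]

lemma IsUnit.mul_rpow_neg_mul_star {y : A} (hy : IsUnit y) (α : ℝ) :
    y * (star y * y) ^ (-α) * star y = (y * star y) ^ (1 - α) := by
  have hc := hy.isStrictlyPositive_mul_star_self
  calc y * (star y * y) ^ (-α) * star y = (y * star y) ^ (-α) * (y * star y) ^ (1 : ℝ) := by
        rw [hy.mul_rpow_star_mul_self, rpow_one _ hc.nonneg, mul_assoc]
    _ = (y * star y) ^ (1 - α) := by rw [← rpow_add hc.isUnit, neg_add_eq_sub]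

end

theorem stmt18_general (g : A →ₗ[ℂ] ℂ) (hg : IsState g)
    (x z y : A) (hy : IsUnit y) (α : ℝ) :
    ‖g (x * y * z)‖ ^ 2 ≤
      (g (x * cfc (fun t : ℝ => t ^ (2 * (1 - α))) (absA (star y)) * star x)).re *
        (g (star z * cfc (fun t : ℝ => t ^ (2 * α)) (absA y) * z)).re := by
  have hcs := hg.1.norm_apply_mul_sq_le hy.isStrictlyPositive_star_mul_self (x * y) z α
  have hconj :
      x * y * (star y * y) ^ (-α) * star (x * y) = x * (y * star y) ^ (1 - α) * star x := by
    rw [← hy.mul_rpow_neg_mul_star, star_mul]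
    noncomm_ring
  rwa [cfc_rpow_two_mul_absA hy.star, star_star, cfc_rpow_two_mul_absA hy, ← hconj]

/-- `|g(x y z)|² ≤ g(x |y*|^{2(1-α)} x*) · g(z* |y|^{2α} z)` for a state `g`
and `y` invertible. -/
theorem stmt18 (g : A →ₗ[ℂ] ℂ) (hg : IsState g)
    (x z y : A) (hy : IsUnit y) (α : ℝ) (hα0 : 0 ≤ α) (hα1 : α ≤ 1) :
    ‖g (x * y * z)‖ ^ 2 ≤
      (g (x * cfc (fun t : ℝ => t ^ (2 * (1 - α))) (absA (star y)) * star x)).re *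
        (g (star z * cfc (fun t : ℝ => t ^ (2 * α)) (absA y) * z)).re :=
  stmt18_general g hg x z y hy α

end
end
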